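/- Let D be a rectangle in Z² and let x ∈ D have strictly positive flood time t. Then at least one of the four wakes of x (up-, down-, left-, right-wake) is wholly contained in the t-flood [[D]]_t. -/
import Mathlib


/-- The four lattice neighbours of a site in `ℤ²`. -/
def nbrs (v : ℤ × ℤ) : Set (ℤ × ℤ) :=
  {u | (u.1 = v.1 ∧ (u.2 = v.2 + 1 ∨ u.2 = v.2 - 1)) ∨
       (u.2 = v.2 ∧ (u.1 = v.1 + 1 ∨ u.1 = v.1 - 1))}

/-- One step of two-neighbour bootstrap percolation on `ℤ²`: a site becomes infected
if at least two of its neighbours are infected; infected sites stay infected. -/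
def bstep (S : Set (ℤ × ℤ)) : Set (ℤ × ℤ) :=
  S ∪ {v | ∃ u w, u ∈ nbrs v ∧ w ∈ nbrs v ∧ u ≠ w ∧ u ∈ S ∧ w ∈ S}

/-- The closure `[A]` of an initial set under the bootstrap process. -/
def bclosure (A : Set (ℤ × ℤ)) : Set (ℤ × ℤ) := ⋃ t, bstep^[t] A

/-- The rectangle (droplet) `[(a,b),(c,d)] = {(x,y) : a ≤ x ≤ c, b ≤ y ≤ d}`. -/
def rect (a b c d : ℤ) : Set (ℤ × ℤ) :=
  {v | a ≤ v.1 ∧ v.1 ≤ c ∧ b ≤ v.2 ∧ v.2 ≤ d}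

/-- The `t`-flood `[[D]]_t` of the rectangle `D = [(a,b),(c,d)]` with initial set `A ⊆ D`:
run the bootstrap process from `D₀ = [A ∩ D] ∪` (the boundary frame of `D`) for `t` steps
and intersect with `D`. -/
def flood (a b c d : ℤ) (A : Set (ℤ × ℤ)) (t : ℕ) : Set (ℤ × ℤ) :=
  (bstep^[t] (bclosure (A ∩ rect a b c d) ∪
      (rect (a - 1) (b - 1) (c + 1) (d + 1) \ rect a b c d))) ∩ rect a b c d

-- infrastructure

def finit (a b c d : ℤ) (A : Set (ℤ × ℤ)) : Set (ℤ × ℤ) :=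
  bclosure (A ∩ rect a b c d) ∪ (rect (a - 1) (b - 1) (c + 1) (d + 1) \ rect a b c d)

lemma flood_def (a b c d : ℤ) (A : Set (ℤ × ℤ)) (t : ℕ) :
    flood a b c d A t = bstep^[t] (finit a b c d A) ∩ rect a b c d := rfl

lemma subset_bstep (S : Set (ℤ × ℤ)) : S ⊆ bstep S := Set.subset_union_left

lemma iter_mono {S : Set (ℤ × ℤ)} {s t : ℕ} (h : s ≤ t) : bstep^[s] S ⊆ bstep^[t] S := by
  induction h with
  | refl => exact subset_rfl
  | step h ih =>
      refine ih.trans ?_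
      rw [Function.iterate_succ_apply']
      exact subset_bstep _

lemma flood_mono (a b c d : ℤ) (A : Set (ℤ × ℤ)) {s t : ℕ} (h : s ≤ t) :
    flood a b c d A s ⊆ flood a b c d A t := fun v hv => ⟨iter_mono h hv.1, hv.2⟩

lemma bstep_bclosure (B : Set (ℤ × ℤ)) : bstep (bclosure B) ⊆ bclosure B := by
  rintro v (h | ⟨u, w, hun, hwn, huw, hu, hw⟩)
  · exact h
  · obtain ⟨i, hi⟩ := Set.mem_iUnion.mp hu
    obtain ⟨j, hj⟩ := Set.mem_iUnion.mp hw
    have hu' : u ∈ bstep^[max i j] B := iter_mono (le_max_left i j) hi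
    have hw' : w ∈ bstep^[max i j] B := iter_mono (le_max_right i j) hj
    refine Set.mem_iUnion.mpr ⟨max i j + 1, ?_⟩
    rw [Function.iterate_succ_apply']
    exact Or.inr ⟨u, w, hun, hwn, huw, hu', hw'⟩

lemma bstep_rect {a b c d : ℤ} {S : Set (ℤ × ℤ)} (h : S ⊆ rect a b c d) :
    bstep S ⊆ rect a b c d := by
  rintro v (hv | ⟨u, w, hun, hwn, huw, hu, hw⟩)
  · exact h hv
  · have h1 := h hu
    have h2 := h hw
    rw [Ne, Prod.ext_iff, not_and_or] at huw
    simp only [nbrs, rect, Set.mem_setOf_eq] at *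
    omega

lemma bclosure_rect {a b c d : ℤ} {B : Set (ℤ × ℤ)} (h : B ⊆ rect a b c d) :
    bclosure B ⊆ rect a b c d := by
  have key : ∀ i, bstep^[i] B ⊆ rect a b c d := by
    intro i
    induction i with
    | zero => simpa using h
    | succ i ih =>
        rw [Function.iterate_succ_apply']
        exact bstep_rect ih
  intro v hv
  obtain ⟨i, hi⟩ := Set.mem_iUnion.mp hv
  exact key i hi

lemma flood_zero (a b c d : ℤ) (A : Set (ℤ × ℤ)) :
    flood a b c d A 0 = bclosure (A ∩ rect a b c d) := by
  ext v
  constructor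
  · rintro ⟨h1 | h2, hR⟩
    · exact h1
    · exact absurd hR h2.2
  · intro h
    exact ⟨Or.inl h, bclosure_rect Set.inter_subset_right h⟩

lemma finit_subset_iter (a b c d : ℤ) (A : Set (ℤ × ℤ)) (t : ℕ) :
    finit a b c d A ⊆ bstep^[t] (finit a b c d A) := by
  have := iter_mono (S := finit a b c d A) (Nat.zero_le t)
  simpa using this

lemma key_up (a b c d : ℤ) (A : Set (ℤ × ℤ)) (t : ℕ) (x1 x2 : ℤ)
    (hx : (x1, x2) ∈ flood a b c d A (t+1))
    (h : ∀ y : ℤ × ℤ, y ∈ rect a b c d → |y.1 - x1| + (x2 + 1) ≤ y.2 →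
      y ∈ flood a b c d A t) :
    ∀ y : ℤ × ℤ, y ∈ rect a b c d → |y.1 - x1| + x2 ≤ y.2 →
      y ∈ flood a b c d A (t+1) := by
  have hxR : (x1, x2) ∈ rect a b c d := hx.2
  rintro ⟨y1, y2⟩ hyR hyw
  replace hyw : |y1 - x1| + x2 ≤ y2 := hyw
  by_cases hc : |y1 - x1| + (x2 + 1) ≤ y2
  · exact flood_mono a b c d A (Nat.le_succ t) (h _ hyR hc)
  rcases lt_trichotomy y1 x1 with hlt | heq | hgt
  · -- left diagonal: witnesses (y1+1, y2) and (y1, y2+1)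
    refine ⟨?_, hyR⟩
    rw [Function.iterate_succ_apply']
    refine Or.inr ⟨(y1 + 1, y2), (y1, y2 + 1), Or.inr ⟨rfl, Or.inl rfl⟩,
      Or.inl ⟨rfl, Or.inl rfl⟩, ?_, ?_, ?_⟩
    · simp only [ne_eq, Prod.mk.injEq, not_and]; omega
    · refine (h (y1 + 1, y2) ?_ ?_).1
      · simp only [rect, Set.mem_setOf_eq] at hxR hyR ⊢; omega
      · show |y1 + 1 - x1| + (x2 + 1) ≤ y2
        simp only [Int.abs_eq_natAbs] at hyw hc ⊢; omega
    · by_cases hd : y2 + 1 ≤ d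
      · refine (h (y1, y2 + 1) ?_ ?_).1
        · simp only [rect, Set.mem_setOf_eq] at hyR ⊢; omega
        · show |y1 - x1| + (x2 + 1) ≤ y2 + 1
          simp only [Int.abs_eq_natAbs] at hyw hc ⊢; omega
      · refine finit_subset_iter a b c d A t (Or.inr ⟨?_, ?_⟩)
        · simp only [rect, Set.mem_setOf_eq] at hyR ⊢; omega
        · simp only [rect, Set.mem_setOf_eq] at hyR ⊢; omega
  · have hy2 : y2 = x2 := by
      simp only [Int.abs_eq_natAbs] at hyw hc; omega
    subst heq hy2
    exact hx
  · -- right diagonal: witnesses (y1-1, y2) and (y1, y2+1)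
    refine ⟨?_, hyR⟩
    rw [Function.iterate_succ_apply']
    refine Or.inr ⟨(y1 - 1, y2), (y1, y2 + 1), Or.inr ⟨rfl, Or.inr rfl⟩,
      Or.inl ⟨rfl, Or.inl rfl⟩, ?_, ?_, ?_⟩
    · simp only [ne_eq, Prod.mk.injEq, not_and]; omega
    · refine (h (y1 - 1, y2) ?_ ?_).1
      · simp only [rect, Set.mem_setOf_eq] at hxR hyR ⊢; omega
      · show |y1 - 1 - x1| + (x2 + 1) ≤ y2
        simp only [Int.abs_eq_natAbs] at hyw hc ⊢; omega
    · by_cases hd : y2 + 1 ≤ d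
      · refine (h (y1, y2 + 1) ?_ ?_).1
        · simp only [rect, Set.mem_setOf_eq] at hyR ⊢; omega
        · show |y1 - x1| + (x2 + 1) ≤ y2 + 1
          simp only [Int.abs_eq_natAbs] at hyw hc ⊢; omega
      · refine finit_subset_iter a b c d A t (Or.inr ⟨?_, ?_⟩)
        · simp only [rect, Set.mem_setOf_eq] at hyR ⊢; omega
        · simp only [rect, Set.mem_setOf_eq] at hyR ⊢; omega

lemma key_down (a b c d : ℤ) (A : Set (ℤ × ℤ)) (t : ℕ) (x1 x2 : ℤ)
    (hx : (x1, x2) ∈ flood a b c d A (t+1))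
    (h : ∀ y : ℤ × ℤ, y ∈ rect a b c d → |y.1 - x1| + y.2 ≤ x2 - 1 →
      y ∈ flood a b c d A t) :
    ∀ y : ℤ × ℤ, y ∈ rect a b c d → |y.1 - x1| + y.2 ≤ x2 →
      y ∈ flood a b c d A (t+1) := by
  have hxR : (x1, x2) ∈ rect a b c d := hx.2
  rintro ⟨y1, y2⟩ hyR hyw
  replace hyw : |y1 - x1| + y2 ≤ x2 := hyw
  by_cases hc : |y1 - x1| + y2 ≤ x2 - 1
  · exact flood_mono a b c d A (Nat.le_succ t) (h _ hyR hc)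
  rcases lt_trichotomy y1 x1 with hlt | heq | hgt
  · refine ⟨?_, hyR⟩
    rw [Function.iterate_succ_apply']
    refine Or.inr ⟨(y1 + 1, y2), (y1, y2 - 1), Or.inr ⟨rfl, Or.inl rfl⟩,
      Or.inl ⟨rfl, Or.inr rfl⟩, ?_, ?_, ?_⟩
    · simp only [ne_eq, Prod.mk.injEq, not_and]; omega
    · refine (h (y1 + 1, y2) ?_ ?_).1
      · simp only [rect, Set.mem_setOf_eq] at hxR hyR ⊢; omega
      · show |y1 + 1 - x1| + y2 ≤ x2 - 1
        simp only [Int.abs_eq_natAbs] at hyw hc ⊢; omega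
    · by_cases hd : b ≤ y2 - 1
      · refine (h (y1, y2 - 1) ?_ ?_).1
        · simp only [rect, Set.mem_setOf_eq] at hyR ⊢; omega
        · show |y1 - x1| + (y2 - 1) ≤ x2 - 1
          simp only [Int.abs_eq_natAbs] at hyw hc ⊢; omega
      · refine finit_subset_iter a b c d A t (Or.inr ⟨?_, ?_⟩)
        · simp only [rect, Set.mem_setOf_eq] at hyR ⊢; omega
        · simp only [rect, Set.mem_setOf_eq] at hyR ⊢; omega
  · have hy2 : y2 = x2 := by
      simp only [Int.abs_eq_natAbs] at hyw hc; omega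
    subst heq hy2
    exact hx
  · refine ⟨?_, hyR⟩
    rw [Function.iterate_succ_apply']
    refine Or.inr ⟨(y1 - 1, y2), (y1, y2 - 1), Or.inr ⟨rfl, Or.inr rfl⟩,
      Or.inl ⟨rfl, Or.inr rfl⟩, ?_, ?_, ?_⟩
    · simp only [ne_eq, Prod.mk.injEq, not_and]; omega
    · refine (h (y1 - 1, y2) ?_ ?_).1
      · simp only [rect, Set.mem_setOf_eq] at hxR hyR ⊢; omega
      · show |y1 - 1 - x1| + y2 ≤ x2 - 1
        simp only [Int.abs_eq_natAbs] at hyw hc ⊢; omega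
    · by_cases hd : b ≤ y2 - 1
      · refine (h (y1, y2 - 1) ?_ ?_).1
        · simp only [rect, Set.mem_setOf_eq] at hyR ⊢; omega
        · show |y1 - x1| + (y2 - 1) ≤ x2 - 1
          simp only [Int.abs_eq_natAbs] at hyw hc ⊢; omega
      · refine finit_subset_iter a b c d A t (Or.inr ⟨?_, ?_⟩)
        · simp only [rect, Set.mem_setOf_eq] at hyR ⊢; omega
        · simp only [rect, Set.mem_setOf_eq] at hyR ⊢; omega

lemma key_left (a b c d : ℤ) (A : Set (ℤ × ℤ)) (t : ℕ) (x1 x2 : ℤ)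
    (hx : (x1, x2) ∈ flood a b c d A (t+1))
    (h : ∀ y : ℤ × ℤ, y ∈ rect a b c d → |y.2 - x2| + y.1 ≤ x1 - 1 →
      y ∈ flood a b c d A t) :
    ∀ y : ℤ × ℤ, y ∈ rect a b c d → |y.2 - x2| + y.1 ≤ x1 →
      y ∈ flood a b c d A (t+1) := by
  have hxR : (x1, x2) ∈ rect a b c d := hx.2
  rintro ⟨y1, y2⟩ hyR hyw
  replace hyw : |y2 - x2| + y1 ≤ x1 := hyw
  by_cases hc : |y2 - x2| + y1 ≤ x1 - 1
  · exact flood_mono a b c d A (Nat.le_succ t) (h _ hyR hc)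
  rcases lt_trichotomy y2 x2 with hlt | heq | hgt
  · refine ⟨?_, hyR⟩
    rw [Function.iterate_succ_apply']
    refine Or.inr ⟨(y1, y2 + 1), (y1 - 1, y2), Or.inl ⟨rfl, Or.inl rfl⟩,
      Or.inr ⟨rfl, Or.inr rfl⟩, ?_, ?_, ?_⟩
    · simp only [ne_eq, Prod.mk.injEq, not_and]; omega
    · refine (h (y1, y2 + 1) ?_ ?_).1
      · simp only [rect, Set.mem_setOf_eq] at hxR hyR ⊢; omega
      · show |y2 + 1 - x2| + y1 ≤ x1 - 1
        simp only [Int.abs_eq_natAbs] at hyw hc ⊢; omega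
    · by_cases hd : a ≤ y1 - 1
      · refine (h (y1 - 1, y2) ?_ ?_).1
        · simp only [rect, Set.mem_setOf_eq] at hyR ⊢; omega
        · show |y2 - x2| + (y1 - 1) ≤ x1 - 1
          simp only [Int.abs_eq_natAbs] at hyw hc ⊢; omega
      · refine finit_subset_iter a b c d A t (Or.inr ⟨?_, ?_⟩)
        · simp only [rect, Set.mem_setOf_eq] at hyR ⊢; omega
        · simp only [rect, Set.mem_setOf_eq] at hyR ⊢; omega
  · have hy1 : y1 = x1 := by
      simp only [Int.abs_eq_natAbs] at hyw hc; omega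
    subst heq hy1
    exact hx
  · refine ⟨?_, hyR⟩
    rw [Function.iterate_succ_apply']
    refine Or.inr ⟨(y1, y2 - 1), (y1 - 1, y2), Or.inl ⟨rfl, Or.inr rfl⟩,
      Or.inr ⟨rfl, Or.inr rfl⟩, ?_, ?_, ?_⟩
    · simp only [ne_eq, Prod.mk.injEq, not_and]; omega
    · refine (h (y1, y2 - 1) ?_ ?_).1
      · simp only [rect, Set.mem_setOf_eq] at hxR hyR ⊢; omega
      · show |y2 - 1 - x2| + y1 ≤ x1 - 1
        simp only [Int.abs_eq_natAbs] at hyw hc ⊢; omega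
    · by_cases hd : a ≤ y1 - 1
      · refine (h (y1 - 1, y2) ?_ ?_).1
        · simp only [rect, Set.mem_setOf_eq] at hyR ⊢; omega
        · show |y2 - x2| + (y1 - 1) ≤ x1 - 1
          simp only [Int.abs_eq_natAbs] at hyw hc ⊢; omega
      · refine finit_subset_iter a b c d A t (Or.inr ⟨?_, ?_⟩)
        · simp only [rect, Set.mem_setOf_eq] at hyR ⊢; omega
        · simp only [rect, Set.mem_setOf_eq] at hyR ⊢; omega

lemma key_right (a b c d : ℤ) (A : Set (ℤ × ℤ)) (t : ℕ) (x1 x2 : ℤ)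
    (hx : (x1, x2) ∈ flood a b c d A (t+1))
    (h : ∀ y : ℤ × ℤ, y ∈ rect a b c d → |y.2 - x2| + (x1 + 1) ≤ y.1 →
      y ∈ flood a b c d A t) :
    ∀ y : ℤ × ℤ, y ∈ rect a b c d → |y.2 - x2| + x1 ≤ y.1 →
      y ∈ flood a b c d A (t+1) := by
  have hxR : (x1, x2) ∈ rect a b c d := hx.2
  rintro ⟨y1, y2⟩ hyR hyw
  replace hyw : |y2 - x2| + x1 ≤ y1 := hyw
  by_cases hc : |y2 - x2| + (x1 + 1) ≤ y1
  · exact flood_mono a b c d A (Nat.le_succ t) (h _ hyR hc)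
  rcases lt_trichotomy y2 x2 with hlt | heq | hgt
  · refine ⟨?_, hyR⟩
    rw [Function.iterate_succ_apply']
    refine Or.inr ⟨(y1, y2 + 1), (y1 + 1, y2), Or.inl ⟨rfl, Or.inl rfl⟩,
      Or.inr ⟨rfl, Or.inl rfl⟩, ?_, ?_, ?_⟩
    · simp only [ne_eq, Prod.mk.injEq, not_and]; omega
    · refine (h (y1, y2 + 1) ?_ ?_).1
      · simp only [rect, Set.mem_setOf_eq] at hxR hyR ⊢; omega
      · show |y2 + 1 - x2| + (x1 + 1) ≤ y1
        simp only [Int.abs_eq_natAbs] at hyw hc ⊢; omega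
    · by_cases hd : y1 + 1 ≤ c
      · refine (h (y1 + 1, y2) ?_ ?_).1
        · simp only [rect, Set.mem_setOf_eq] at hyR ⊢; omega
        · show |y2 - x2| + (x1 + 1) ≤ y1 + 1
          simp only [Int.abs_eq_natAbs] at hyw hc ⊢; omega
      · refine finit_subset_iter a b c d A t (Or.inr ⟨?_, ?_⟩)
        · simp only [rect, Set.mem_setOf_eq] at hyR ⊢; omega
        · simp only [rect, Set.mem_setOf_eq] at hyR ⊢; omega
  · have hy1 : y1 = x1 := by
      simp only [Int.abs_eq_natAbs] at hyw hc; omega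
    subst heq hy1
    exact hx
  · refine ⟨?_, hyR⟩
    rw [Function.iterate_succ_apply']
    refine Or.inr ⟨(y1, y2 - 1), (y1 + 1, y2), Or.inl ⟨rfl, Or.inr rfl⟩,
      Or.inr ⟨rfl, Or.inl rfl⟩, ?_, ?_, ?_⟩
    · simp only [ne_eq, Prod.mk.injEq, not_and]; omega
    · refine (h (y1, y2 - 1) ?_ ?_).1
      · simp only [rect, Set.mem_setOf_eq] at hxR hyR ⊢; omega
      · show |y2 - 1 - x2| + (x1 + 1) ≤ y1
        simp only [Int.abs_eq_natAbs] at hyw hc ⊢; omega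
    · by_cases hd : y1 + 1 ≤ c
      · refine (h (y1 + 1, y2) ?_ ?_).1
        · simp only [rect, Set.mem_setOf_eq] at hyR ⊢; omega
        · show |y2 - x2| + (x1 + 1) ≤ y1 + 1
          simp only [Int.abs_eq_natAbs] at hyw hc ⊢; omega
      · refine finit_subset_iter a b c d A t (Or.inr ⟨?_, ?_⟩)
        · simp only [rect, Set.mem_setOf_eq] at hyR ⊢; omega
        · simp only [rect, Set.mem_setOf_eq] at hyR ⊢; omega

theorem stmt14aux (a b c d : ℤ) (A : Set (ℤ × ℤ)) :
    ∀ t : ℕ, 0 < t → ∀ x : ℤ × ℤ, x ∈ flood a b c d A t →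
      (∀ s < t, x ∉ flood a b c d A s) →
      ((∀ y : ℤ × ℤ, y ∈ rect a b c d → |y.1 - x.1| + y.2 ≤ x.2 → y ∈ flood a b c d A t) ∨
       (∀ y : ℤ × ℤ, y ∈ rect a b c d → |y.1 - x.1| + x.2 ≤ y.2 → y ∈ flood a b c d A t) ∨
       (∀ y : ℤ × ℤ, y ∈ rect a b c d → |y.2 - x.2| + y.1 ≤ x.1 → y ∈ flood a b c d A t) ∨
       (∀ y : ℤ × ℤ, y ∈ rect a b c d → |y.2 - x.2| + x.1 ≤ y.1 → y ∈ flood a b c d A t)) := by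
  intro t
  induction t using Nat.strong_induction_on with
  | _ t IH =>
  intro ht x hxt hmin
  obtain ⟨x1, x2⟩ := x
  obtain ⟨s0, rfl⟩ : ∃ s0, t = s0 + 1 := ⟨t - 1, by omega⟩
  have hxR : (x1, x2) ∈ rect a b c d := hxt.2
  have hxE := hxt.1
  rw [Function.iterate_succ_apply'] at hxE
  have hxnot : (x1, x2) ∉ bstep^[s0] (finit a b c d A) := fun hh =>
    hmin s0 (Nat.lt_succ_self s0) ⟨hh, hxR⟩
  rcases hxE with hmem | ⟨u, w, hun, hwn, huw, huE, hwE⟩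
  · exact absurd hmem hxnot
  have hxnotC : (x1, x2) ∉ bclosure (A ∩ rect a b c d) := by
    intro hh
    exact hmin 0 ht (by rw [flood_zero]; exact hh)
  obtain ⟨n, hnn, hnE, hnC⟩ :
      ∃ n, n ∈ nbrs (x1, x2) ∧ n ∈ bstep^[s0] (finit a b c d A) ∧
        n ∉ bclosure (A ∩ rect a b c d) := by
    by_cases hu : u ∈ bclosure (A ∩ rect a b c d)
    · by_cases hw : w ∈ bclosure (A ∩ rect a b c d)
      · exact absurd (bstep_bclosure (A ∩ rect a b c d)
          (Or.inr ⟨u, w, hun, hwn, huw, hu, hw⟩)) hxnotC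
      · exact ⟨w, hwn, hwE, hw⟩
    · exact ⟨u, hun, huE, hu⟩
  have hIH : n ∈ rect a b c d →
      ((∀ y : ℤ × ℤ, y ∈ rect a b c d → |y.1 - n.1| + y.2 ≤ n.2 → y ∈ flood a b c d A s0) ∨
       (∀ y : ℤ × ℤ, y ∈ rect a b c d → |y.1 - n.1| + n.2 ≤ y.2 → y ∈ flood a b c d A s0) ∨
       (∀ y : ℤ × ℤ, y ∈ rect a b c d → |y.2 - n.2| + y.1 ≤ n.1 → y ∈ flood a b c d A s0) ∨
       (∀ y : ℤ × ℤ, y ∈ rect a b c d → |y.2 - n.2| + n.1 ≤ y.1 → y ∈ flood a b c d A s0)) := by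
    intro hnR
    classical
    have hex : ∃ s, n ∈ flood a b c d A s := ⟨s0, ⟨hnE, hnR⟩⟩
    have hsn := Nat.find_spec hex
    have hle : Nat.find hex ≤ s0 := Nat.find_le ⟨hnE, hnR⟩
    have hpos : 0 < Nat.find hex := by
      rcases Nat.eq_zero_or_pos (Nat.find hex) with h0 | h
      · exfalso
        rw [h0, flood_zero] at hsn
        exact hnC hsn
      · exact h
    have hmins : ∀ s < Nat.find hex, n ∉ flood a b c d A s :=
      fun s hs => Nat.find_min hex hs
    have hm := IH (Nat.find hex) (by omega) hpos n hsn hmins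
    refine hm.imp ?_ (Or.imp ?_ (Or.imp ?_ ?_)) <;>
      exact fun h y hyR hyc => flood_mono a b c d A hle (h y hyR hyc)
  obtain ⟨n1, n2⟩ := n
  replace hnn : (n1 = x1 ∧ (n2 = x2 + 1 ∨ n2 = x2 - 1)) ∨
      (n2 = x2 ∧ (n1 = x1 + 1 ∨ n1 = x1 - 1)) := hnn
  rcases hnn with ⟨h1, h2 | h2⟩ | ⟨h1, h2 | h2⟩ <;> subst h2 <;>
    rw [h1] at hIH hnE hnC
  · -- up neighbour (x1, x2+1)
    by_cases hnR : ((x1, x2 + 1) : ℤ × ℤ) ∈ rect a b c d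
    · rcases hIH hnR with hD | hU | hL | hR
      · exfalso
        refine hmin s0 (Nat.lt_succ_self _) (hD (x1, x2) hxR ?_)
        show |x1 - x1| + x2 ≤ x2 + 1
        simp only [Int.abs_eq_natAbs]; omega
      · exact Or.inr (Or.inl (key_up a b c d A s0 x1 x2 hxt hU))
      · refine Or.inr (Or.inr (Or.inl (key_left a b c d A s0 x1 x2 hxt ?_)))
        intro y hyR hyc
        refine hL y hyR ?_
        have hyc' : |y.2 - x2| + y.1 ≤ x1 - 1 := hyc
        show |y.2 - (x2 + 1)| + y.1 ≤ x1
        simp only [Int.abs_eq_natAbs] at hyc' ⊢; omega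
      · refine Or.inr (Or.inr (Or.inr (key_right a b c d A s0 x1 x2 hxt ?_)))
        intro y hyR hyc
        refine hR y hyR ?_
        have hyc' : |y.2 - x2| + (x1 + 1) ≤ y.1 := hyc
        show |y.2 - (x2 + 1)| + x1 ≤ y.1
        simp only [Int.abs_eq_natAbs] at hyc' ⊢; omega
    · refine Or.inr (Or.inl (key_up a b c d A s0 x1 x2 hxt ?_))
      intro y hyR hyc
      exfalso
      have hyc' : |y.1 - x1| + (x2 + 1) ≤ y.2 := hyc
      simp only [rect, Set.mem_setOf_eq] at hxR hyR hnR
      simp only [Int.abs_eq_natAbs] at hyc'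
      omega
  · -- down neighbour (x1, x2-1)
    by_cases hnR : ((x1, x2 - 1) : ℤ × ℤ) ∈ rect a b c d
    · rcases hIH hnR with hD | hU | hL | hR
      · exact Or.inl (key_down a b c d A s0 x1 x2 hxt hD)
      · exfalso
        refine hmin s0 (Nat.lt_succ_self _) (hU (x1, x2) hxR ?_)
        show |x1 - x1| + (x2 - 1) ≤ x2
        simp only [Int.abs_eq_natAbs]; omega
      · refine Or.inr (Or.inr (Or.inl (key_left a b c d A s0 x1 x2 hxt ?_)))
        intro y hyR hyc
        refine hL y hyR ?_
        have hyc' : |y.2 - x2| + y.1 ≤ x1 - 1 := hyc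
        show |y.2 - (x2 - 1)| + y.1 ≤ x1
        simp only [Int.abs_eq_natAbs] at hyc' ⊢; omega
      · refine Or.inr (Or.inr (Or.inr (key_right a b c d A s0 x1 x2 hxt ?_)))
        intro y hyR hyc
        refine hR y hyR ?_
        have hyc' : |y.2 - x2| + (x1 + 1) ≤ y.1 := hyc
        show |y.2 - (x2 - 1)| + x1 ≤ y.1
        simp only [Int.abs_eq_natAbs] at hyc' ⊢; omega
    · refine Or.inl (key_down a b c d A s0 x1 x2 hxt ?_)
      intro y hyR hyc
      exfalso
      have hyc' : |y.1 - x1| + y.2 ≤ x2 - 1 := hyc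
      simp only [rect, Set.mem_setOf_eq] at hxR hyR hnR
      simp only [Int.abs_eq_natAbs] at hyc'
      omega
  · -- right neighbour (x1+1, x2)
    by_cases hnR : ((x1 + 1, x2) : ℤ × ℤ) ∈ rect a b c d
    · rcases hIH hnR with hD | hU | hL | hR
      · refine Or.inl (key_down a b c d A s0 x1 x2 hxt ?_)
        intro y hyR hyc
        refine hD y hyR ?_
        have hyc' : |y.1 - x1| + y.2 ≤ x2 - 1 := hyc
        show |y.1 - (x1 + 1)| + y.2 ≤ x2
        simp only [Int.abs_eq_natAbs] at hyc' ⊢; omega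
      · refine Or.inr (Or.inl (key_up a b c d A s0 x1 x2 hxt ?_))
        intro y hyR hyc
        refine hU y hyR ?_
        have hyc' : |y.1 - x1| + (x2 + 1) ≤ y.2 := hyc
        show |y.1 - (x1 + 1)| + x2 ≤ y.2
        simp only [Int.abs_eq_natAbs] at hyc' ⊢; omega
      · exfalso
        refine hmin s0 (Nat.lt_succ_self _) (hL (x1, x2) hxR ?_)
        show |x2 - x2| + x1 ≤ x1 + 1
        simp only [Int.abs_eq_natAbs]; omega
      · exact Or.inr (Or.inr (Or.inr (key_right a b c d A s0 x1 x2 hxt hR)))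
    · refine Or.inr (Or.inr (Or.inr (key_right a b c d A s0 x1 x2 hxt ?_)))
      intro y hyR hyc
      exfalso
      have hyc' : |y.2 - x2| + (x1 + 1) ≤ y.1 := hyc
      simp only [rect, Set.mem_setOf_eq] at hxR hyR hnR
      simp only [Int.abs_eq_natAbs] at hyc'
      omega
  · -- left neighbour (x1-1, x2)
    by_cases hnR : ((x1 - 1, x2) : ℤ × ℤ) ∈ rect a b c d
    · rcases hIH hnR with hD | hU | hL | hR
      · refine Or.inl (key_down a b c d A s0 x1 x2 hxt ?_)
        intro y hyR hyc
        refine hD y hyR ?_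
        have hyc' : |y.1 - x1| + y.2 ≤ x2 - 1 := hyc
        show |y.1 - (x1 - 1)| + y.2 ≤ x2
        simp only [Int.abs_eq_natAbs] at hyc' ⊢; omega
      · refine Or.inr (Or.inl (key_up a b c d A s0 x1 x2 hxt ?_))
        intro y hyR hyc
        refine hU y hyR ?_
        have hyc' : |y.1 - x1| + (x2 + 1) ≤ y.2 := hyc
        show |y.1 - (x1 - 1)| + x2 ≤ y.2
        simp only [Int.abs_eq_natAbs] at hyc' ⊢; omega
      · exact Or.inr (Or.inr (Or.inl (key_left a b c d A s0 x1 x2 hxt hL)))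
      · exfalso
        refine hmin s0 (Nat.lt_succ_self _) (hR (x1, x2) hxR ?_)
        show |x2 - x2| + (x1 - 1) ≤ x1
        simp only [Int.abs_eq_natAbs]; omega
    · refine Or.inr (Or.inr (Or.inl (key_left a b c d A s0 x1 x2 hxt ?_)))
      intro y hyR hyc
      exfalso
      have hyc' : |y.2 - x2| + y.1 ≤ x1 - 1 := hyc
      simp only [rect, Set.mem_setOf_eq] at hxR hyR hnR
      simp only [Int.abs_eq_natAbs] at hyc'
      omega

example : True := trivial

/-- If `x ∈ D` has strictly positive flood time `t`, then at least one of
the four wakes of `x` (down-, up-, left-, right-wake) is contained in the `t`-flood of `D`. -/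
theorem stmt14 (a b c d : ℤ) (A : Set (ℤ × ℤ)) (hA : A ⊆ rect a b c d)
    (x : ℤ × ℤ) (hx : x ∈ rect a b c d) (t : ℕ) (ht : 0 < t)
    (hxt : x ∈ flood a b c d A t) (hmin : ∀ s < t, x ∉ flood a b c d A s) :
    {y ∈ rect a b c d | |y.1 - x.1| + y.2 ≤ x.2} ⊆ flood a b c d A t ∨
    {y ∈ rect a b c d | |y.1 - x.1| + x.2 ≤ y.2} ⊆ flood a b c d A t ∨
    {y ∈ rect a b c d | |y.2 - x.2| + y.1 ≤ x.1} ⊆ flood a b c d A t ∨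
    {y ∈ rect a b c d | |y.2 - x.2| + x.1 ≤ y.1} ⊆ flood a b c d A t := by
  have h := stmt14aux a b c d A t ht x hxt hmin
  refine h.imp ?_ (Or.imp ?_ (Or.imp ?_ ?_)) <;>
    exact fun hh y hy => hh y hy.1 hy.2
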